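/- In the Mallows model with fixed θ > 1 and fixed integer k ≥ 1, the success probability converges: lim_{N→∞} W(N,k)/[N]_θ! = (θ−1)·((θ^k−1)/θ^{k+1})·Σ_{i=k}^{∞} 1/(θ^i−1), and the infinite series converges. -/

import Mathlib

/-- Number of left-to-right maxima of the permutation `π` (one-line notation
`i ↦ π i`): positions `j` such that `π i < π j` for all `i < j`. -/
def lrmaxCount {N : ℕ} (π : Equiv.Perm (Fin N)) : ℕ :=
  (Finset.univ.filter (fun j : Fin N => ∀ i, i < j → π i < π j)).card

/-- Number of inversions of `π`: pairs of positions `i < j` with `π i > π j`. -/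
def invCount {N : ℕ} (π : Equiv.Perm (Fin N)) : ℕ :=
  (Finset.univ.filter (fun p : Fin N × Fin N => p.1 < p.2 ∧ π p.2 < π p.1)).card

/-- Position `j` is a left-to-right maximum of `π`. -/
def IsLRMax {N : ℕ} (π : Equiv.Perm (Fin N)) (j : Fin N) : Prop :=
  ∀ i, i < j → π i < π j

/-- `π` is `k`-winnable: the positional strategy that rejects the first `k`
candidates (positions `0,…,k-1`) and accepts the next left-to-right maximum
thereafter selects the position of the maximal value. -/
def KWinnable {N : ℕ} (k : ℕ) (π : Equiv.Perm (Fin N)) : Prop :=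
  ∃ j : Fin N, k ≤ (j : ℕ) ∧ IsLRMax π j ∧ (∀ i, π i ≤ π j) ∧
    ∀ i : Fin N, k ≤ (i : ℕ) → i < j → ¬ IsLRMax π i

open Classical in
/-- Ewens-weighted count of `k`-winnable permutations:
`W(N,k) = Σ_{k-winnable π ∈ S_N} θ^{lrmax(π)}`. -/
noncomputable def W (R : Type*) [CommRing R] (N k : ℕ) (θ : R) : R :=
  ∑ π ∈ Finset.univ.filter (fun π : Equiv.Perm (Fin N) => KWinnable k π),
    θ ^ lrmaxCount π

/-- θ-analogue `[n]_θ = 1 + θ + ⋯ + θ^{n-1}`. -/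
def tA (n : ℕ) (θ : ℝ) : ℝ := ∑ m ∈ Finset.range n, θ ^ m

/-- θ-factorial `[m]_θ! = [m]_θ [m-1]_θ ⋯ [1]_θ`. -/
def qfact (m : ℕ) (θ : ℝ) : ℝ := ∏ n ∈ Finset.range m, tA (n + 1) θ

open Classical in
/-- Mallows-weighted count of `k`-winnable permutations:
`W(N,k) = Σ_{k-winnable π ∈ S_N} θ^{inv(π)}`. -/
noncomputable def WM (N k : ℕ) (θ : ℝ) : ℝ :=
  ∑ π ∈ Finset.univ.filter (fun π : Equiv.Perm (Fin N) => KWinnable k π),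
    θ ^ invCount π

/-!
Encode a permutation by its left Lehmer code `c j = #{i < j | π j < π i} ≤ j`. This is a
bijection `S_N ≃ ∏ j, Fin (j + 1)` under which `inv π = ∑ j, c j` and the left-to-right maxima
are exactly the zeros of `c`. The `k`-rejection strategy wins iff exactly one zero of `c` sits
at a position `≥ k`, so the weighted count factorises:
`W(N,k) = [k]_θ! · ∑_{j=k}^{N-1} ∏_{i ∈ [k,N) \ {j}} θ [i]_θ`.
Dividing by `[N]_θ!` telescopes to
`(θ - 1) θ^(N-k) (θ^k - 1) / (θ (θ^N - 1)) · ∑_{j=k}^{N-1} 1 / (θ^j - 1)`,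
and the limit is read off factor by factor.
-/

open Finset Filter Topology

theorem Finset.strictAntiOn_card_filter_lt {α : Type*} [LinearOrder α] (s : Finset α) :
    StrictAntiOn (fun a => #{x ∈ s | a < x}) s := by
  intro a _ b hb hab
  refine card_lt_card ⟨monotone_filter_right s fun _ _ => hab.trans, fun hsub => ?_⟩
  exact lt_irrefl b (mem_filter.1 (hsub (mem_filter.2 ⟨hb, hab⟩))).2

theorem Finset.sum_prod_erase_eq_prod_mul_sum_inv {ι K : Type*} [Field K] [DecidableEq ι]
    (s : Finset ι) {a : ι → K} (ha : ∀ i ∈ s, a i ≠ 0) :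
    ∑ j ∈ s, ∏ i ∈ s.erase j, a i = (∏ i ∈ s, a i) * ∑ j ∈ s, (a j)⁻¹ := by
  rw [mul_sum]
  refine sum_congr rfl fun j hj => (eq_mul_inv_iff_mul_eq₀ (ha j hj)).2 ?_
  rw [mul_comm, mul_prod_erase s a hj]

theorem Fin.sum_filter_le_eq_sum_Ico {M : Type*} [AddCommMonoid M] (f : ℕ → M) (k N : ℕ) :
    ∑ j ∈ ({j | k ≤ (j : ℕ)} : Finset (Fin N)), f j = ∑ j ∈ Ico k N, f j := by
  rw [sum_filter, Fin.sum_univ_eq_sum_range (fun j => if k ≤ j then f j else 0), ← sum_filter]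
  congr 1
  ext j
  simp only [mem_filter, mem_range, mem_Ico]
  omega

theorem tendsto_sum_Ico_of_summable {f : ℕ → ℝ} {k : ℕ} (hf : Summable fun i => f (i + k)) :
    Tendsto (fun N => ∑ j ∈ Ico k N, f j) atTop (𝓝 (∑' i, f (i + k))) := by
  refine (hf.hasSum.tendsto_sum_nat.comp (tendsto_sub_atTop_nat k)).congr fun N => ?_
  simp only [Function.comp, sum_Ico_eq_sum_range, add_comm k]

namespace Equiv.Perm

variable {N : ℕ}

def lehmerCode (π : Perm (Fin N)) (j : Fin N) : Fin (j + 1) :=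
  ⟨#{i | i < j ∧ π j < π i}, Nat.lt_succ_of_le <| (Fin.card_Iio j).le.trans' <|
    card_le_card fun _ hi => mem_Iio.2 (mem_filter.1 hi).2.1⟩

theorem invCount_eq_sum_lehmerCode (π : Perm (Fin N)) :
    invCount π = ∑ j, (lehmerCode π j : ℕ) := by
  simp only [invCount, lehmerCode, card_filter, Fintype.sum_prod_type]
  exact sum_comm

theorem isLRMax_iff_lehmerCode_eq_zero (π : Perm (Fin N)) (j : Fin N) :
    IsLRMax π j ↔ lehmerCode π j = 0 := by
  simp only [IsLRMax, lehmerCode, Fin.ext_iff, Fin.val_zero, card_eq_zero,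
    filter_eq_empty_iff, mem_univ, true_implies, not_and, not_lt]
  refine forall_congr' fun i => imp_congr_right fun hij => ⟨le_of_lt, fun h => ?_⟩
  exact h.lt_of_ne (π.injective.ne hij.ne)

theorem lehmerCode_eq_card_image_Iic (π : Perm (Fin N)) (j : Fin N) :
    (lehmerCode π j : ℕ) = #{w ∈ (Iic j).image π | π j < w} := by
  rw [filter_image, card_image_of_injective _ π.injective]
  simp only [lehmerCode]
  congr 1
  ext i
  simp only [mem_filter, mem_univ, true_and, mem_Iic]
  exact ⟨fun h => ⟨h.1.le, h.2⟩,
    fun h => ⟨h.1.lt_of_ne (by rintro rfl; exact lt_irrefl _ h.2), h.2⟩⟩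

theorem image_Iic_eq_of_eqOn_Ioi {π π' : Perm (Fin N)} {j : Fin N}
    (htail : ∀ i, j < i → π i = π' i) : (Iic j).image π = (Iic j).image π' := by
  have key : ∀ {σ τ : Perm (Fin N)}, (∀ i, j < i → σ i = τ i) →
      (Iic j).image σ ⊆ (Iic j).image τ := by
    intro σ τ h w hw
    obtain ⟨i, hi, rfl⟩ := mem_image.1 hw
    refine mem_image.2 ⟨τ.symm (σ i), mem_Iic.2 (not_lt.1 fun hlt => ?_), by simp⟩
    have := h _ hlt
    rw [apply_symm_apply] at this
    exact (not_lt.2 (mem_Iic.1 hi)) (σ.injective this ▸ hlt)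
  exact (key htail).antisymm (key fun i hi => (htail i hi).symm)

/- `π j` is the element of the common set `π '' [0, j] = π' '' [0, j]` having exactly
`lehmerCode π j` larger elements. -/
theorem apply_eq_of_lehmerCode_eq {π π' : Perm (Fin N)} {j : Fin N}
    (htail : ∀ i, j < i → π i = π' i) (hcode : lehmerCode π j = lehmerCode π' j) :
    π j = π' j := by
  have hS := image_Iic_eq_of_eqOn_Ioi htail
  refine (strictAntiOn_card_filter_lt ((Iic j).image π)).injOn
    (mem_image_of_mem π (mem_Iic.2 le_rfl)) (hS ▸ mem_image_of_mem π' (mem_Iic.2 le_rfl)) ?_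
  rw [← lehmerCode_eq_card_image_Iic, hS, ← lehmerCode_eq_card_image_Iic, hcode]

theorem lehmerCode_injective : Function.Injective (lehmerCode (N := N)) := by
  intro π π' h
  by_contra hne
  have hs : ({i | π i ≠ π' i} : Finset (Fin N)).Nonempty :=
    let ⟨i, hi⟩ := not_forall.1 fun h => hne (Equiv.ext h); ⟨i, mem_filter.2 ⟨mem_univ _, hi⟩⟩
  obtain ⟨j, hj, hmax⟩ := exists_max_image _ id hs
  refine (mem_filter.1 hj).2 (apply_eq_of_lehmerCode_eq (fun i hji => ?_) (congrFun h j))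
  by_contra hi
  exact not_le.2 hji (hmax i (mem_filter.2 ⟨mem_univ _, hi⟩))

theorem lehmerCode_bijective : Function.Bijective (lehmerCode (N := N)) := by
  refine (Fintype.bijective_iff_injective_and_card _).2 ⟨lehmerCode_injective, ?_⟩
  simp [Fintype.card_perm, Fintype.card_pi, Fin.prod_univ_eq_prod_range (· + 1),
    prod_range_add_one_eq_factorial]

theorem isLRMax_of_forall_le {π : Perm (Fin N)} {m : Fin N} (hm : ∀ i, π i ≤ π m) :
    IsLRMax π m :=
  fun i hi => (hm i).lt_of_ne (π.injective.ne hi.ne)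

theorem kWinnable_iff_existsUnique (k : ℕ) (π : Perm (Fin N)) :
    KWinnable k π ↔ ∃! j : Fin N, k ≤ (j : ℕ) ∧ IsLRMax π j := by
  constructor
  · rintro ⟨j, hkj, hj, hmax, hfirst⟩
    refine ⟨j, ⟨hkj, hj⟩, fun i ⟨hki, hi⟩ => ?_⟩
    rcases lt_trichotomy i j with hij | rfl | hji
    · exact absurd hi (hfirst i hki hij)
    · rfl
    · exact absurd (hmax i) (not_le.2 (hi j hji))
  · rintro ⟨j, ⟨hkj, hj⟩, huniq⟩
    have : Nonempty (Fin N) := ⟨j⟩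
    obtain ⟨m, hm⟩ := Finite.exists_max π
    have hmj : π m ≤ π j := by
      by_cases hkm : k ≤ (m : ℕ)
      · rw [huniq m ⟨hkm, isLRMax_of_forall_le hm⟩]
      · exact (hj m (Fin.lt_def.2 (by omega))).le
    refine ⟨j, hkj, hj, fun i => (hm i).trans hmj, fun i hki hij hi => ?_⟩
    exact hij.ne (huniq i ⟨hki, hi⟩)

end Equiv.Perm

section QAnalogues

variable {θ : ℝ}

theorem Fin.sum_univ_pow_eq_tA (θ : ℝ) (n : ℕ) : ∑ x : Fin (n + 1), θ ^ (x : ℕ) = tA (n + 1) θ :=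
  Fin.sum_univ_eq_sum_range (θ ^ ·) (n + 1)

theorem tA_succ_sub_one (θ : ℝ) (n : ℕ) : tA (n + 1) θ - 1 = θ * tA n θ := by
  rw [tA, geom_sum_succ, tA, add_sub_cancel_right]

theorem tA_eq_geom (hθ : θ ≠ 1) (n : ℕ) : tA n θ = (θ ^ n - 1) / (θ - 1) :=
  geom_sum_eq hθ n

theorem tA_pos (hθ : 0 ≤ θ) {n : ℕ} (hn : 0 < n) : 0 < tA n θ := by
  obtain ⟨m, rfl⟩ := Nat.exists_eq_add_of_lt hn
  rw [tA, sum_range_succ']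
  positivity

theorem qfact_mul_prod_Ico_mul (θ : ℝ) {k N : ℕ} (hkN : k ≤ N) :
    qfact k θ * (∏ i ∈ Ico k N, tA i θ) * tA N θ = qfact N θ * tA k θ := by
  induction N, hkN using Nat.le_induction with
  | base => rw [Ico_self, prod_empty, mul_one]
  | succ N hkN ih =>
    rw [prod_Ico_succ_top hkN, ← mul_assoc, ih, qfact, qfact, prod_range_succ]
    ring

end QAnalogues

section WinSlice

variable {N : ℕ}

/-- The Lehmer codes whose only zero entry at a position `≥ k` sits at position `j`. -/
def winSlice (k : ℕ) (j i : Fin N) : Finset (Fin (i + 1)) :=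
  if i = j then {0} else if k ≤ (i : ℕ) then {0}ᶜ else univ

theorem mem_piFinset_winSlice {k : ℕ} {j : Fin N} {c : (i : Fin N) → Fin (i + 1)} :
    c ∈ Fintype.piFinset (winSlice k j) ↔
      c j = 0 ∧ ∀ i : Fin N, k ≤ (i : ℕ) → i ≠ j → c i ≠ 0 := by
  simp only [Fintype.mem_piFinset, winSlice]
  refine ⟨fun h => ⟨by simpa using h j, fun i hki hij => by simpa [hij, hki] using h i⟩,
    fun ⟨hj, h⟩ i => ?_⟩
  by_cases hij : i = j
  · subst hij; simpa using hj
  · by_cases hki : k ≤ (i : ℕ) <;> simp [hij, hki, h i]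

open Classical in
theorem filter_existsUnique_eq_biUnion_winSlice (k : ℕ) :
    ({c | ∃! j : Fin N, k ≤ (j : ℕ) ∧ c j = 0} : Finset ((j : Fin N) → Fin (j + 1))) =
      ({j | k ≤ (j : ℕ)} : Finset (Fin N)).biUnion fun j => Fintype.piFinset (winSlice k j) := by
  ext c
  simp only [mem_filter, mem_univ, true_and, mem_biUnion, mem_piFinset_winSlice]
  constructor
  · rintro ⟨j, ⟨hkj, hj⟩, huniq⟩
    exact ⟨j, hkj, hj, fun i hki hij hi => hij (huniq i ⟨hki, hi⟩)⟩
  · rintro ⟨j, hkj, hj, h⟩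
    exact ⟨j, ⟨hkj, hj⟩, fun i ⟨hki, hi⟩ => by_contra fun hij => h i hki hij hi⟩

theorem pairwiseDisjoint_piFinset_winSlice (k : ℕ) :
    (({j | k ≤ (j : ℕ)} : Finset (Fin N)) : Set (Fin N)).PairwiseDisjoint
      fun j => Fintype.piFinset (winSlice k j) := by
  intro j hj j' _ hne
  refine disjoint_left.2 fun c hc hc' => ?_
  rw [mem_piFinset_winSlice] at hc hc'
  exact hc'.2 j (mem_filter.1 hj).2 hne hc.1

def sliceWeight (k j : ℕ) (θ : ℝ) (i : ℕ) : ℝ :=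
  if i = j then 1 else if k ≤ i then θ * tA i θ else tA (i + 1) θ

theorem sum_pow_winSlice (k : ℕ) (θ : ℝ) (j i : Fin N) :
    ∑ x ∈ winSlice k j i, θ ^ (x : ℕ) = sliceWeight k j θ i := by
  simp only [winSlice, sliceWeight, Fin.val_inj]
  split_ifs
  · simp
  · rw [← tA_succ_sub_one, ← Fin.sum_univ_pow_eq_tA, ← sum_compl_add_sum {0}]
    simp
  · exact Fin.sum_univ_pow_eq_tA θ i

theorem prod_range_sliceWeight (θ : ℝ) {k N j : ℕ} (hj : j ∈ Ico k N) :
    ∏ i ∈ range N, sliceWeight k j θ i = qfact k θ * ∏ i ∈ (Ico k N).erase j, θ * tA i θ := by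
  obtain ⟨hkj, hjN⟩ := mem_Ico.1 hj
  rw [← prod_range_mul_prod_Ico _ (hkj.trans hjN.le), ← mul_prod_erase _ _ hj, qfact]
  simp only [sliceWeight, if_true, one_mul]
  congr 1
  · refine prod_congr rfl fun i hi => ?_
    have hik : i < k := mem_range.1 hi
    rw [if_neg (by omega), if_neg (by omega)]
  · refine prod_congr rfl fun i hi => ?_
    rw [if_neg (ne_of_mem_erase hi), if_pos (mem_Ico.1 (mem_of_mem_erase hi)).1]

end WinSlice

open Equiv.Perm in
open Classical in
theorem WM_eq_sum_lehmerCodes (N k : ℕ) (θ : ℝ) :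
    WM N k θ = ∑ c : (j : Fin N) → Fin (j + 1) with ∃! j : Fin N, k ≤ (j : ℕ) ∧ c j = 0,
      ∏ j, θ ^ (c j : ℕ) := by
  rw [WM, sum_filter, sum_filter, ← lehmerCode_bijective.sum_comp]
  refine sum_congr rfl fun π _ => ?_
  simp only [kWinnable_iff_existsUnique, isLRMax_iff_lehmerCode_eq_zero,
    invCount_eq_sum_lehmerCode, prod_pow_eq_pow_sum]

theorem WM_eq_qfact_mul_sum_prod_erase (N k : ℕ) (θ : ℝ) :
    WM N k θ = qfact k θ * ∑ j ∈ Ico k N, ∏ i ∈ (Ico k N).erase j, θ * tA i θ := by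
  rw [WM_eq_sum_lehmerCodes, filter_existsUnique_eq_biUnion_winSlice,
    sum_biUnion (pairwiseDisjoint_piFinset_winSlice k), mul_sum, ← Fin.sum_filter_le_eq_sum_Ico]
  refine sum_congr rfl fun j hj => ?_
  rw [← prod_range_sliceWeight θ (mem_Ico.2 ⟨(mem_filter.1 hj).2, j.isLt⟩),
    ← Fin.prod_univ_eq_prod_range]
  exact (prod_univ_sum (winSlice k j) fun _ x => θ ^ (x : ℕ)).symm.trans
    (prod_congr rfl fun i _ => sum_pow_winSlice k θ j i)

section Ratio

variable {θ : ℝ}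

theorem WM_div_qfact_eq_tA (hθ : 0 < θ) {k N : ℕ} (hk : 1 ≤ k) (hkN : k ≤ N) :
    WM N k θ / qfact N θ =
      θ ^ (N - k) * tA k θ / tA N θ * ∑ j ∈ Ico k N, (θ * tA j θ)⁻¹ := by
  have htA : ∀ j ∈ Ico k N, 0 < tA j θ := fun j hj => tA_pos hθ.le (by simp at hj; omega)
  have hqN : 0 < qfact N θ := prod_pos fun n _ => tA_pos hθ.le n.succ_pos
  have hN : 0 < tA N θ := tA_pos hθ.le (by omega)
  rw [WM_eq_qfact_mul_sum_prod_erase, sum_prod_erase_eq_prod_mul_sum_inv _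
    fun j hj => (mul_pos hθ (htA j hj)).ne', prod_mul_distrib, prod_const, Nat.card_Ico,
    ← mul_assoc]
  field_simp
  linear_combination (∑ j ∈ Ico k N, 1 / (θ * tA j θ)) * qfact_mul_prod_Ico_mul θ hkN

theorem WM_div_qfact_eq (hθ : 1 < θ) {k N : ℕ} (hk : 1 ≤ k) (hkN : k ≤ N) :
    WM N k θ / qfact N θ =
      (θ - 1) * (θ ^ (N - k) * (θ ^ k - 1) / (θ * (θ ^ N - 1))) *
        ∑ j ∈ Ico k N, 1 / (θ ^ j - 1) := by
  have hpow : ∀ {n : ℕ}, 0 < n → θ ^ n - 1 ≠ 0 :=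
    fun hn => (sub_pos.2 (one_lt_pow₀ hθ hn.ne')).ne'
  have hθ1 : θ - 1 ≠ 0 := (sub_pos.2 hθ).ne'
  rw [WM_div_qfact_eq_tA (by linarith) hk hkN, mul_sum, mul_sum]
  refine sum_congr rfl fun j hj => ?_
  have hj : 0 < j := by simp only [mem_Ico] at hj; omega
  simp only [tA_eq_geom hθ.ne']
  field_simp [hpow hj, hpow (show 0 < k by omega), hpow (show 0 < N by omega)]

end Ratio

section Limits

variable {θ : ℝ}

theorem summable_one_div_pow_add_sub_one (hθ : 1 < θ) {k : ℕ} (hk : 1 ≤ k) :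
    Summable fun i : ℕ => 1 / (θ ^ (i + k) - 1) := by
  have hθk : 0 < θ ^ k - 1 := sub_pos.2 (one_lt_pow₀ hθ (by omega))
  refine Summable.of_nonneg_of_le (fun i => ?_) (fun i => ?_)
    ((summable_geometric_of_lt_one (by positivity) (inv_lt_one_of_one_lt₀ hθ)).mul_left
      (1 / (θ ^ k - 1)))
  · have : 1 < θ ^ (i + k) := one_lt_pow₀ hθ (by omega)
    exact one_div_nonneg.2 (by linarith)
  · -- `θ ^ (i + k) - 1 ≥ θ ^ i * (θ ^ k - 1)` as `θ ^ i ≥ 1`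
    have hi : 1 ≤ θ ^ i := one_le_pow₀ hθ.le
    rw [inv_pow, ← one_div, one_div_mul_one_div, pow_add]
    exact one_div_le_one_div_of_le (by positivity) (by nlinarith)

theorem tendsto_pow_sub_mul_div (hθ : 1 < θ) (k : ℕ) :
    Tendsto (fun N => θ ^ (N - k) * (θ ^ k - 1) / (θ * (θ ^ N - 1))) atTop
      (𝓝 ((θ ^ k - 1) / θ ^ (k + 1))) := by
  have hlim : Tendsto (fun N => (θ ^ k - 1) / θ ^ (k + 1) * (1 - θ⁻¹ ^ N)⁻¹) atTop
      (𝓝 ((θ ^ k - 1) / θ ^ (k + 1))) := by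
    have := ((tendsto_pow_atTop_nhds_zero_of_lt_one (by positivity)
      (inv_lt_one_of_one_lt₀ hθ)).const_sub 1).inv₀ (by norm_num)
    simpa using this.const_mul ((θ ^ k - 1) / θ ^ (k + 1))
  refine hlim.congr' ((eventually_gt_atTop k).mono fun N hN => ?_)
  have hθ0 : 0 < θ := by linarith
  have hN1 : 0 < θ ^ N - 1 := sub_pos.2 (one_lt_pow₀ hθ (by omega))
  have hsplit : θ ^ N = θ ^ (N - k) * θ ^ k := by rw [← pow_add, Nat.sub_add_cancel hN.le]
  rw [inv_pow]
  field_simp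
  rw [hsplit]
  ring

end Limits

/-- in the Mallows model with fixed `θ > 1` and fixed `k ≥ 1`, the
series `Σ_{i=k}^{∞} 1/(θ^i − 1)` converges and
`lim_{N→∞} W(N,k)/[N]_θ! = (θ−1)·((θ^k−1)/θ^{k+1})·Σ_{i=k}^{∞} 1/(θ^i−1)`. -/
theorem mallows_left_justified_limit (θ : ℝ) (hθ : 1 < θ) (k : ℕ) (hk : 1 ≤ k) :
    Summable (fun i : ℕ => (1 : ℝ) / (θ ^ (i + k) - 1)) ∧
    Filter.Tendsto (fun N => WM N k θ / qfact N θ) Filter.atTop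
      (nhds ((θ - 1) * ((θ ^ k - 1) / θ ^ (k + 1)) *
        ∑' i : ℕ, (1 : ℝ) / (θ ^ (i + k) - 1))) := by
  have hsum := summable_one_div_pow_add_sub_one hθ hk
  refine ⟨hsum, ?_⟩
  have hlim := ((tendsto_pow_sub_mul_div hθ k).const_mul (θ - 1)).mul
    (tendsto_sum_Ico_of_summable (f := fun j => 1 / (θ ^ j - 1)) hsum)
  exact hlim.congr' ((eventually_ge_atTop k).mono fun N hN => (WM_div_qfact_eq hθ hk hN).symm)
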